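/- arXiv:2410.24202 — 5 statements merged into one kernel-verified Lean document; each statement's English description precedes it below -/
import Mathlib

section
/- Let f : F_2^{2n} → ℝ be a nonnegative function satisfying the Fourier inversion identity f(z) = (1/2^n) Σ_{z' ∈ F_2^{2n}} (-1)^{[z,z']} f(z') for all z. Then for any linear subspace V ⊆ F_2^{2n} and any z' ∈ F_2^{2n}, Σ_{z∈V} f(z) ≥ Σ_{z∈V} f(z + z'). -/
/-!
Expanding `f (z + u)` by the inversion identity and summing over `z ∈ V` gives
`∑_{z ∈ V} f (z + u) = 2⁻ⁿ ∑_w χ(w) (-1)^{[u,w]} f w`, where `χ(w) = ∑_{z ∈ V} (-1)^{[z,w]}` is a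
character sum over a subgroup, hence `0` or `|V|`. Since `χ ≥ 0`, `f ≥ 0` and `(-1)^{[u,w]} ≤ 1`,
the right-hand side is largest at `u = 0`.
-/

open Finset
open scoped Classical

abbrev BV (n : ℕ) := Fin n → ZMod 2
abbrev Pt (n : ℕ) := BV n × BV n

def dotp {n : ℕ} (x y : BV n) : ZMod 2 := ∑ i, x i * y i
def symp {n : ℕ} (z w : Pt n) : ZMod 2 := dotp z.1 w.2 + dotp w.1 z.2
def sgn (b : ZMod 2) : ℝ := (-1 : ℝ) ^ b.val

namespace AddChar

variable {A R : Type*} [AddGroup A]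

lemma sum_nonneg [Fintype A] [CommSemiring R] [PartialOrder R] [IsOrderedRing R] [IsDomain R]
    (ψ : AddChar A R) : 0 ≤ ∑ a, ψ a := by
  rw [sum_eq_ite]
  split_ifs <;> simp

lemma sum_filter_mem_nonneg [Fintype A] [CommSemiring R] [PartialOrder R] [IsOrderedRing R]
    [IsDomain R] (ψ : AddChar A R) (H : AddSubgroup A) :
    0 ≤ ∑ a ∈ univ.filter (· ∈ H), ψ a := by
  rw [sum_subtype (p := (· ∈ H)) _ (fun a ↦ by simp)]
  exact sum_nonneg (ψ.compAddMonoidHom H.subtype)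

/-- A character of a finite group takes roots of unity as values, and the only real ones are `±1`. -/
lemma apply_le_one [Finite A] [CommRing R] [LinearOrder R] [IsStrictOrderedRing R]
    (ψ : AddChar A R) (a : A) : ψ a ≤ 1 := by
  have h : |ψ a| ^ addOrderOf a = 1 := by
    rw [pow_abs, ← map_nsmul_eq_pow, addOrderOf_nsmul_eq_zero, map_zero_eq_one, abs_one]
  rw [pow_eq_one_iff_of_nonneg (abs_nonneg _) (addOrderOf_pos a).ne'] at h
  exact h ▸ le_abs_self _

end AddChar

theorem sum_filter_mem_add_le_of_eq_char_expansion {A : Type*} [AddGroup A] [Fintype A]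
    (ψ : A → AddChar A ℝ) {c : ℝ} (hc : 0 ≤ c) (f : A → ℝ) (hf : ∀ a, 0 ≤ f a)
    (hexp : ∀ a, f a = c * ∑ b, ψ b a * f b) (H : AddSubgroup A) (u : A) :
    ∑ a ∈ univ.filter (· ∈ H), f (a + u) ≤ ∑ a ∈ univ.filter (· ∈ H), f a := by
  set χ : A → ℝ := fun b ↦ ∑ a ∈ univ.filter (· ∈ H), ψ b a
  have hshift : ∀ v, ∑ a ∈ univ.filter (· ∈ H), f (a + v) = c * ∑ b, χ b * (ψ b v * f b) := by
    intro v
    calc ∑ a ∈ univ.filter (· ∈ H), f (a + v)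
        = ∑ a ∈ univ.filter (· ∈ H), c * ∑ b, ψ b a * (ψ b v * f b) :=
          sum_congr rfl fun a _ ↦ by simp only [hexp (a + v), AddChar.map_add_eq_mul, mul_assoc]
      _ = c * ∑ b, χ b * (ψ b v * f b) := by
          rw [← mul_sum, sum_comm]
          simp only [χ, sum_mul]
  have h0 := hshift 0
  simp only [add_zero, AddChar.map_zero_eq_one, one_mul] at h0
  rw [hshift, h0]
  gcongr with b
  · exact AddChar.sum_filter_mem_nonneg _ H
  · exact mul_le_of_le_one_left (hf b) (AddChar.apply_le_one _ _)

lemma sgn_add (a b : ZMod 2) : sgn (a + b) = sgn a * sgn b := by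
  rw [sgn, sgn, sgn, ZMod.val_add, ← neg_one_pow_eq_pow_mod_two, pow_add]

lemma symp_add_left {n : ℕ} (z₁ z₂ w : Pt n) : symp (z₁ + z₂) w = symp z₁ w + symp z₂ w := by
  simp only [symp, dotp, Prod.fst_add, Prod.snd_add, Pi.add_apply, add_mul, mul_add,
    sum_add_distrib]
  ring

def sympChar {n : ℕ} (w : Pt n) : AddChar (Pt n) ℝ where
  toFun z := sgn (symp z w)
  map_zero_eq_one' := by simp [symp, dotp, sgn]
  map_add_eq_mul' z₁ z₂ := by rw [symp_add_left, sgn_add]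

/-- If `f : F_2^{2n} → ℝ` is nonnegative and satisfies the symplectic Fourier inversion
identity, then for any linear subspace `V` and any shift `z'`,
`∑_{z ∈ V} f(z) ≥ ∑_{z ∈ V} f(z + z')`. -/
theorem stmt1 (n : ℕ) (f : Pt n → ℝ) (hf : ∀ z, 0 ≤ f z)
    (hinv : ∀ z, f z = (1 / 2 ^ n) * ∑ z', sgn (symp z z') * f z')
    (V : Submodule (ZMod 2) (Pt n)) (z' : Pt n) :
    ∑ z ∈ Finset.univ.filter (· ∈ V), f (z + z') ≤
      ∑ z ∈ Finset.univ.filter (· ∈ V), f z :=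
  sum_filter_mem_add_le_of_eq_char_expansion sympChar (by positivity) f hf hinv V.toAddSubgroup z'
end

section
/- Let S ⊆ F_2^{2n}, and let V ⊆ F_2^{2n} be an affine subspace. Let U = {y ∈ F_2^n : ∃ y' such that (y,y') ∈ V} be the projection of V onto the first n coordinates. Then there exists an affine map ℓ : F_2^n → F_2^n whose graph G(ℓ) = {(y, ℓ(y)) : y ∈ F_2^n} satisfies |G(ℓ) ∩ S| ≥ |S ∩ V| · |U| / |V|. -/
/-!
Let `K = {k | (0, k) ∈ W}` and choose a linear map `L` whose graph over the projection of `W`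
lies in `W`. With `ℓ₀` the affine map `y ↦ L y + (w.2 - L w.1)`, the shear
`p ↦ (p.1, p.2 - ℓ₀ p.1)` maps `V` bijectively onto `U × K`, so `|V| = |U| |K|` and `V` is
covered by the graphs of the affine maps `ℓ₀ + c`, `c ∈ K`. By pigeonhole one of them meets
`S ∩ V` in at least `|S ∩ V| / |K| = |S ∩ V| |U| / |V|` points.
-/

open Finset
open scoped Classical

section Shear

variable {E F : Type*} [AddCommGroup F]

theorem ncard_eq_mul_of_mem_iff {V : Set (E × F)} {U : Set E} {K : Set F} {ℓ : E → F}
    (hV : ∀ p, p ∈ V ↔ p.1 ∈ U ∧ p.2 - ℓ p.1 ∈ K) : V.ncard = U.ncard * K.ncard := by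
  let e : E × F ≃ E × F := Equiv.prodShear (Equiv.refl E) fun x => Equiv.subRight (ℓ x)
  have : V = e ⁻¹' (U ×ˢ K) := Set.ext hV
  rw [this, Set.ncard_preimage_of_injective_subset_range e.injective (by simp), Set.ncard_prod]

theorem exists_ncard_div_le_ncard_graph_inter [Finite E] [Finite F] {V : Set (E × F)}
    {K : Set F} {ℓ : E → F} (hK : K.Nonempty) (hV : ∀ p ∈ V, p.2 - ℓ p.1 ∈ K)
    (S : Set (E × F)) :
    ∃ c, ((S ∩ V).ncard : ℝ) / K.ncard ≤ ({p : E × F | p.2 = ℓ p.1 + c} ∩ S).ncard := by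
  have := Fintype.ofFinite E
  have := Fintype.ofFinite F
  have hK0 : (K.ncard : ℝ) ≠ 0 := by exact_mod_cast hK.ncard_pos.ne'
  obtain ⟨c, -, hc⟩ := Finset.exists_le_card_fiber_of_nsmul_le_card_of_maps_to
    (s := (S ∩ V).toFinset) (t := K.toFinset) (f := fun p => p.2 - ℓ p.1)
    (b := ((S ∩ V).ncard : ℝ) / K.ncard) (by simpa using fun p _ hp => hV p hp)
    (by simpa using hK) (by
      rw [nsmul_eq_mul, ← Set.ncard_eq_toFinset_card', ← Set.ncard_eq_toFinset_card',
        mul_div_cancel₀ _ hK0])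
  refine ⟨c, hc.trans ?_⟩
  rw [Set.ncard_eq_toFinset_card']
  gcongr
  intro p
  simp only [Finset.mem_filter, Set.mem_toFinset, Set.mem_inter_iff, Set.mem_ofPred_eq]
  exact fun ⟨⟨hS, _⟩, h⟩ => ⟨eq_add_of_sub_eq' h, hS⟩

theorem exists_graph_ncard_inter_ge [Finite E] [Finite F] {V : Set (E × F)} {U : Set E}
    {K : Set F} {ℓ : E → F} (hK : K.Nonempty) (hV : ∀ p, p ∈ V ↔ p.1 ∈ U ∧ p.2 - ℓ p.1 ∈ K)
    (S : Set (E × F)) :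
    ∃ c, ((S ∩ V).ncard : ℝ) * U.ncard / V.ncard ≤
      ({p : E × F | p.2 = ℓ p.1 + c} ∩ S).ncard := by
  obtain ⟨c, hc⟩ := exists_ncard_div_le_ncard_graph_inter hK (fun p hp => ((hV p).1 hp).2) S
  refine ⟨c, le_trans ?_ hc⟩
  rw [ncard_eq_mul_of_mem_iff hV, Nat.cast_mul, mul_comm (U.ncard : ℝ), ← div_mul_div_comm]
  exact mul_le_of_le_one_right (by positivity) (div_self_le_one _)

end Shear

section Ring

variable {R E F : Type*} [Ring R] [AddCommGroup E] [Module R E] [AddCommGroup F] [Module R F]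
  {W : Submodule R (E × F)} {L : E →ₗ[R] F}

theorem Submodule.mem_iff_of_prodMk_mem (hL : ∀ x ∈ W.map (LinearMap.fst R E F), (x, L x) ∈ W)
    (v : E × F) :
    v ∈ W ↔ v.1 ∈ W.map (LinearMap.fst R E F) ∧ v.2 - L v.1 ∈ W.comap (LinearMap.inr R E F) := by
  have hv : v = (v.1, L v.1) + LinearMap.inr R E F (v.2 - L v.1) := by ext <;> simp
  constructor
  · intro h
    have h1 : v.1 ∈ W.map (LinearMap.fst R E F) := ⟨v, h, rfl⟩
    refine ⟨h1, ?_⟩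
    rw [Submodule.mem_comap, eq_sub_of_add_eq' hv.symm]
    exact W.sub_mem h (hL _ h1)
  · rintro ⟨h1, h2⟩
    rw [hv]
    exact W.add_mem (hL _ h1) h2

theorem Submodule.mem_image_add_left_iff
    (hL : ∀ x ∈ W.map (LinearMap.fst R E F), (x, L x) ∈ W) (w p : E × F) :
    p ∈ (w + ·) '' (W : Set (E × F)) ↔ p.1 - w.1 ∈ W.map (LinearMap.fst R E F) ∧
      p.2 - (L p.1 + (w.2 - L w.1)) ∈ W.comap (LinearMap.inr R E F) := by
  rw [Set.image_add_left, Set.mem_preimage, SetLike.mem_coe, W.mem_iff_of_prodMk_mem hL]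
  have h1 : (-w + p).1 = p.1 - w.1 := neg_add_eq_sub ..
  have h2 : (-w + p).2 - L (-w + p).1 = p.2 - (L p.1 + (w.2 - L w.1)) := by
    rw [h1, map_sub]; simp only [Prod.snd_add, Prod.snd_neg]; abel
  rw [h2, h1]

end Ring

section DivisionRing

variable {k E F : Type*} [DivisionRing k] [AddCommGroup E] [Module k E] [AddCommGroup F]
  [Module k F]

theorem Submodule.exists_linearMap_prodMk_mem (W : Submodule k (E × F)) :
    ∃ L : E →ₗ[k] F, ∀ x ∈ W.map (LinearMap.fst k E F), (x, L x) ∈ W := by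
  obtain ⟨s, hs⟩ := ((LinearMap.fst k E F).submoduleMap W).exists_rightInverse_of_surjective
    (LinearMap.range_eq_top.2 (LinearMap.submoduleMap_surjective _ W))
  obtain ⟨L, hL⟩ := LinearMap.exists_extend ((LinearMap.snd k E F).comp (W.subtype.comp s))
  refine ⟨L, fun x hx => ?_⟩
  have h1 : (s ⟨x, hx⟩ : E × F).1 = x := congrArg Subtype.val (LinearMap.congr_fun hs ⟨x, hx⟩)
  have h2 : L x = (s ⟨x, hx⟩ : E × F).2 := LinearMap.congr_fun hL ⟨x, hx⟩
  have hsx : (x, L x) = (s ⟨x, hx⟩ : E × F) := Prod.ext h1.symm h2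
  exact hsx ▸ (s ⟨x, hx⟩).2

end DivisionRing

/-- For `S ⊆ F_2^{2n}` and an affine subspace `V = w + W`, with `U` the projection of `V`
onto the first `n` coordinates, there exists an affine map `ℓ(y) = L y + b` whose graph
satisfies `|G(ℓ) ∩ S| ≥ |S ∩ V| · |U| / |V|`. -/
theorem stmt2 (n : ℕ) (S : Set (Pt n)) (w : Pt n) (W : Submodule (ZMod 2) (Pt n)) :
    let V : Set (Pt n) := (fun v => w + v) '' (W : Set (Pt n))
    let U : Set (BV n) := {y | ∃ y', (y, y') ∈ V}
    ∃ (L : BV n →ₗ[ZMod 2] BV n) (b : BV n),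
      ((S ∩ V).ncard : ℝ) * U.ncard / V.ncard ≤
        (({p : Pt n | p.2 = L p.1 + b} ∩ S).ncard : ℝ) := by
  intro V U
  obtain ⟨L, hL⟩ := W.exists_linearMap_prodMk_mem
  have hU : ∀ y, y ∈ U ↔ y - w.1 ∈ W.map (LinearMap.fst _ _ _) := fun y =>
    ⟨fun ⟨_, h⟩ => ((W.mem_image_add_left_iff hL w _).1 h).1,
     fun h => ⟨L y + (w.2 - L w.1), (W.mem_image_add_left_iff hL w _).2 ⟨h, by simp⟩⟩⟩
  obtain ⟨c, hc⟩ := exists_graph_ncard_inter_ge (K := W.comap (LinearMap.inr _ _ _))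
    (ℓ := fun y => L y + (w.2 - L w.1)) ⟨0, zero_mem _⟩
    (fun p => by rw [W.mem_image_add_left_iff hL w p, hU]; rfl) S
  exact ⟨L, w.2 - L w.1 + c, by simpa only [add_assoc] using hc⟩
end

section
/- Let S ⊆ F_2^m be a finite nonempty set such that Pr_{z1,z2 ∈ S}[z1 + z2 ∈ S] ≥ ε (probabilities over independent uniform z1, z2 ∈ S). Then, assuming the Balog–Szemerédi–Gowers theorem (there is S' ⊆ S with |S'| ≥ (ε/3)|S| and |S'+S'| ≤ (6/ε)^8 |S|) and the polynomial Freiman–Ruzsa theorem over F_2 (any T with |T+T| ≤ K|T| is covered by (2K)^8 translates of a subspace of size at most |T|), there exists an affine subspace V ⊆ F_2^m with |S ∩ V| ≥ (ε^{73} / (3·6^{72})) |S| and |V| ≤ |S|. -/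
open Finset
open scoped Classical Pointwise

/-!
BSG gives a large subset `S'` of `S` with doubling constant `K = 3·6^8/ε^9`; PFR covers `S'`
by at most `(2K)^8 = (6/ε)^72` translates of a subspace `W` with `|W| ≤ |S'| ≤ |S|`, so by
pigeonhole one translate contains at least `|S'| / (6/ε)^72 ≥ ε^73 / (3·6^72) · |S|` points
of `S' ⊆ S`.
-/

theorem Finset.exists_card_le_card_mul_card_filter_mem {α ι : Type*} {T : Finset α}
    {Cs : Finset ι} {U : ι → Set α} (hT : T.Nonempty) (hcover : ↑T ⊆ ⋃ c ∈ Cs, U c) :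
    ∃ c ∈ Cs, #T ≤ #Cs * #(T.filter (· ∈ U c)) := by
  have hT_le_sum : #T ≤ ∑ c ∈ Cs, #(T.filter (· ∈ U c)) := by
    refine (card_le_card fun x hx => ?_).trans card_biUnion_le
    obtain ⟨c, hc, hxc⟩ := Set.mem_iUnion₂.mp (hcover hx)
    exact mem_biUnion.mpr ⟨c, hc, mem_filter.mpr ⟨hx, hxc⟩⟩
  have hCs : Cs.Nonempty := by
    obtain ⟨x, hx⟩ := hT
    obtain ⟨c, hc, -⟩ := Set.mem_iUnion₂.mp (hcover hx)
    exact ⟨c, hc⟩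
  refine exists_le_of_sum_le hCs ?_
  rw [sum_const, smul_eq_mul, ← mul_sum]
  exact Nat.mul_le_mul_left _ hT_le_sum

theorem le_div_mul_of_le_mul_of_mul_le {a s s' L δ : ℝ} (hδ : 0 < δ) (hL : 0 ≤ L)
    (ha : a ≤ L * s) (hs' : δ * s ≤ s') : a ≤ L / δ * s' := by
  calc a ≤ L * s := ha
    _ = L / δ * (δ * s) := by field_simp
    _ ≤ L / δ * s' := by gcongr

theorem stmt5_general (m : ℕ) (ε : ℝ) (hε : 0 < ε) (S : Finset (BV m)) (hS : S.Nonempty)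
    (hBSG : ∃ S' ⊆ S, (ε / 3) * (S.card : ℝ) ≤ (S'.card : ℝ) ∧
      ((S' + S').card : ℝ) ≤ (6 / ε) ^ 8 * (S.card : ℝ))
    (hPFR : ∀ (T : Finset (BV m)) (K : ℝ), T.Nonempty →
      ((T + T).card : ℝ) ≤ K * (T.card : ℝ) →
      ∃ (W : Submodule (ZMod 2) (BV m)) (Cs : Finset (BV m)),
        (Cs.card : ℝ) ≤ (2 * K) ^ 8 ∧ (Nat.card W : ℝ) ≤ (T.card : ℝ) ∧
        ↑T ⊆ ⋃ c ∈ Cs, (fun v => c + v) '' (W : Set (BV m))) :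
    ∃ (w : BV m) (W : Submodule (ZMod 2) (BV m)),
      (ε ^ 73 / (3 * 6 ^ 72)) * (S.card : ℝ) ≤
        ((S.filter (· ∈ (fun v => w + v) '' (W : Set (BV m)))).card : ℝ) ∧
      Nat.card W ≤ S.card := by
  obtain ⟨S', hS'S, hS'large, hS'sum⟩ := hBSG
  have hS'ne : S'.Nonempty := by
    rw [← card_pos, ← Nat.cast_pos (α := ℝ)]
    exact lt_of_lt_of_le (by have := hS.card_pos; positivity) hS'large
  obtain ⟨W, Cs, hCs, hW, hcover⟩ :=
    hPFR S' _ hS'ne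
      (le_div_mul_of_le_mul_of_mul_le (by positivity) (by positivity) hS'sum hS'large)
  have hCs' : (#Cs : ℝ) ≤ 6 ^ 72 / ε ^ 72 := hCs.trans_eq (by field_simp; ring)
  obtain ⟨w, -, hw⟩ := exists_card_le_card_mul_card_filter_mem hS'ne hcover
  refine ⟨w, W, ?_, ?_⟩
  · have key :
        ε / 3 * #S ≤ 6 ^ 72 / ε ^ 72 * #(S.filter (· ∈ (fun v => w + v) '' (W : Set _))) :=
      calc ε / 3 * #S ≤ #S' := hS'large
        _ ≤ #Cs * #(S'.filter (· ∈ (fun v => w + v) '' (W : Set _))) := by exact_mod_cast hw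
        _ ≤ 6 ^ 72 / ε ^ 72 * #(S.filter _) := by gcongr
    calc ε ^ 73 / (3 * 6 ^ 72) * #S = ε ^ 72 / 6 ^ 72 * (ε / 3 * #S) := by ring
      _ ≤ ε ^ 72 / 6 ^ 72 * (6 ^ 72 / ε ^ 72 * _) := by gcongr
      _ = _ := by field_simp
  · exact_mod_cast hW.trans (Nat.cast_le.mpr (card_le_card hS'S))

/-- If `S ⊆ F_2^m` satisfies `Pr_{z1,z2 ∈ S}[z1 + z2 ∈ S] ≥ ε`, then, assuming the
Balog–Szemerédi–Gowers theorem for `S` and the polynomial Freiman–Ruzsa theorem over `F_2`,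
there exists an affine subspace `V = w + W` with `|S ∩ V| ≥ (ε^73 / (3·6^72)) |S|` and
`|V| ≤ |S|`. -/
theorem stmt5 (m : ℕ) (ε : ℝ) (hε : 0 < ε) (S : Finset (BV m)) (hS : S.Nonempty)
    (hprob : ε * (S.card : ℝ) ^ 2 ≤
      (((S ×ˢ S).filter (fun p => p.1 + p.2 ∈ S)).card : ℝ))
    (hBSG : ∃ S' ⊆ S, (ε / 3) * (S.card : ℝ) ≤ (S'.card : ℝ) ∧
      ((S' + S').card : ℝ) ≤ (6 / ε) ^ 8 * (S.card : ℝ))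
    (hPFR : ∀ (T : Finset (BV m)) (K : ℝ), T.Nonempty →
      ((T + T).card : ℝ) ≤ K * (T.card : ℝ) →
      ∃ (W : Submodule (ZMod 2) (BV m)) (Cs : Finset (BV m)),
        (Cs.card : ℝ) ≤ (2 * K) ^ 8 ∧ (Nat.card W : ℝ) ≤ (T.card : ℝ) ∧
        ↑T ⊆ ⋃ c ∈ Cs, (fun v => c + v) '' (W : Set (BV m))) :
    ∃ (w : BV m) (W : Submodule (ZMod 2) (BV m)),
      (ε ^ 73 / (3 * 6 ^ 72)) * (S.card : ℝ) ≤
        ((S.filter (· ∈ (fun v => w + v) '' (W : Set (BV m)))).card : ℝ) ∧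
      Nat.card W ≤ S.card :=
  stmt5_general m ε hε S hS hBSG hPFR
end

section
/- Let f : F_2^{2n} → ℝ≥0 satisfy f(y,α) = 0 whenever ⟨y,α⟩ = 1, and let ℓ : F_2^n → F_2^n be a symmetric linear map. Then there exists a symmetric linear map ℓ' with zero diagonal (⟨e_i, ℓ'(e_i)⟩ = 0 for all standard basis vectors e_i) such that Σ_y f(y, ℓ'(y)) ≥ Σ_y f(y, ℓ(y)). -/
open Finset
open scoped Classical

lemma dotp_comm {n : ℕ} (x y : BV n) : dotp x y = dotp y x := by
  simp [dotp, mul_comm]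

lemma dotp_single_left {n : ℕ} (i : Fin n) (z : BV n) :
    dotp (Pi.single i 1) z = z i := by
  simp only [dotp]
  rw [Finset.sum_eq_single i] <;> simp (config := {contextual := true}) [Pi.single_apply]

lemma dotp_add_right {n : ℕ} (x y z : BV n) : dotp x (y + z) = dotp x y + dotp x z := by
  simp [dotp, mul_add, Finset.sum_add_distrib]

lemma dotp_smul_right {n : ℕ} (a : ZMod 2) (x y : BV n) : dotp x (a • y) = a * dotp x y := by
  simp [dotp, Finset.mul_sum, mul_comm, mul_left_comm]

def dlin {n : ℕ} (v : BV n) : BV n →ₗ[ZMod 2] ZMod 2 where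
  toFun y := dotp y v
  map_add' x y := by simp [dotp, add_mul, Finset.sum_add_distrib]
  map_smul' a x := by simp [dotp, Finset.mul_sum, mul_assoc]

lemma zmod2_sq : ∀ a : ZMod 2, a * a = a := by decide

lemma diag_eq {n : ℕ} (ℓ : BV n →ₗ[ZMod 2] BV n)
    (hsym : ∀ x y : BV n, dotp x (ℓ y) = dotp (ℓ x) y) (y : BV n) :
    dotp y (ℓ y) = dotp y (fun i => ℓ (Pi.single i 1) i) := by
  have hy : y = ∑ j, y j • Pi.single j (1 : ZMod 2) := by
    conv_lhs => rw [← Finset.univ_sum_single y]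
    congr 1; funext j; ext k; simp [Pi.single_apply]
  have hLy : ∀ i, ℓ y i = ∑ j, y j * ℓ (Pi.single j 1) i := by
    intro i
    conv_lhs => rw [hy]
    rw [map_sum]
    simp
  have hA : ∀ i j, ℓ (Pi.single j 1) i = ℓ (Pi.single i 1) j := by
    intro i j
    have := hsym (Pi.single i 1) (Pi.single j 1)
    rwa [dotp_single_left, dotp_comm, dotp_single_left] at this
  calc dotp y (ℓ y) = ∑ i, y i * (ℓ y) i := rfl
    _ = ∑ i, ∑ j, y i * y j * ℓ (Pi.single j 1) i := by
        apply Finset.sum_congr rfl; intro i _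
        rw [hLy, Finset.mul_sum]
        apply Finset.sum_congr rfl; intro j _; ring
    _ = ∑ p ∈ Finset.univ ×ˢ Finset.univ, y p.1 * y p.2 * ℓ (Pi.single p.2 1) p.1 := by
        rw [Finset.sum_product]
    _ = ∑ p ∈ (Finset.univ : Finset (Fin n)).diag, y p.1 * y p.2 * ℓ (Pi.single p.2 1) p.1
        + ∑ p ∈ (Finset.univ : Finset (Fin n)).offDiag, y p.1 * y p.2 * ℓ (Pi.single p.2 1) p.1 := by
        rw [← Finset.sum_union (Finset.disjoint_diag_offDiag _), Finset.diag_union_offDiag]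
    _ = ∑ p ∈ (Finset.univ : Finset (Fin n)).diag, y p.1 * y p.2 * ℓ (Pi.single p.2 1) p.1 := by
        rw [add_eq_left]
        apply Finset.sum_involution (fun p _ => (p.2, p.1))
        · intro p hp
          have h2 : y p.2 * y p.1 * ℓ (Pi.single p.1 1) p.2 = y p.1 * y p.2 * ℓ (Pi.single p.2 1) p.1 := by
            rw [hA p.2 p.1]; ring
          simpa [h2] using CharTwo.add_self_eq_zero (y p.1 * y p.2 * ℓ (Pi.single p.2 1) p.1)
        · intro p hp _
          simp only [Finset.mem_offDiag] at hp
          intro h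
          exact hp.2.2 ((Prod.ext_iff.1 h).2)
        · intro p hp
          simp only [Finset.mem_offDiag] at hp ⊢
          exact ⟨Finset.mem_univ _, Finset.mem_univ _, fun h => hp.2.2 h.symm⟩
        · intro p hp; rfl
    _ = ∑ i, y i * y i * ℓ (Pi.single i 1) i := by rw [Finset.sum_diag]
    _ = dotp y (fun i => ℓ (Pi.single i 1) i) := by
        apply Finset.sum_congr rfl; intro i _; rw [zmod2_sq]

/-- If `f ≥ 0` vanishes on `⟨y,α⟩ = 1` and `ℓ` is a symmetric linear map, then there is a
symmetric linear map `ℓ'` with zero diagonal such that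
`Σ_y f(y, ℓ' y) ≥ Σ_y f(y, ℓ y)`. -/
theorem stmt12 (n : ℕ) (f : Pt n → ℝ) (hf : ∀ z, 0 ≤ f z)
    (hzero : ∀ y α : BV n, dotp y α = 1 → f (y, α) = 0)
    (ℓ : BV n →ₗ[ZMod 2] BV n)
    (hsym : ∀ x y : BV n, dotp x (ℓ y) = dotp (ℓ x) y) :
    ∃ ℓ' : BV n →ₗ[ZMod 2] BV n,
      (∀ x y : BV n, dotp x (ℓ' y) = dotp (ℓ' x) y) ∧
      (∀ i : Fin n, dotp (Pi.single i 1) (ℓ' (Pi.single i 1)) = 0) ∧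
      ∑ y : BV n, f (y, ℓ y) ≤ ∑ y : BV n, f (y, ℓ' y) := by
  set v : BV n := fun i => ℓ (Pi.single i 1) i with hv
  refine ⟨ℓ + LinearMap.smulRight (dlin v) v, ?_, ?_, ?_⟩
  · intro x y
    have happ : ∀ z : BV n, (ℓ + LinearMap.smulRight (dlin v) v) z = ℓ z + dotp z v • v :=
      fun z => rfl
    rw [happ, happ, dotp_add_right, dotp_comm _ y, dotp_add_right, dotp_smul_right,
      dotp_smul_right, hsym x y, dotp_comm (ℓ x) y, mul_comm]
  · intro i
    rw [dotp_single_left]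
    show ℓ (Pi.single i 1) i + dotp (Pi.single i 1) v • v i = 0
    rw [dotp_single_left]
    show v i + v i • v i = 0
    rw [smul_eq_mul, zmod2_sq]
    exact CharTwo.add_self_eq_zero _
  · apply Finset.sum_le_sum
    intro y _
    by_cases h : dotp y v = 0
    · have : (ℓ + LinearMap.smulRight (dlin v) v) y = ℓ y := by
        show ℓ y + dotp y v • v = ℓ y
        rw [h, zero_smul, add_zero]
      rw [this]
    · have h1 : dotp y v = 1 := by
        revert h; generalize dotp y v = a; revert a; decide
      have h2 : dotp y (ℓ y) = 1 := by rw [diag_eq ℓ hsym y]; exact h1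
      rw [hzero y (ℓ y) h2]
      exact hf _
end

section
/- Let f : F_2^{2n} → ℝ≥0 satisfy the symplectic Fourier inversion identity f(z) = (1/2^n) Σ_{z'} (-1)^{[z,z']} f(z'), the normalization (1/2^n) Σ_z f(z) = 1, and Σ_α f(0,α) ≤ 3. Then Σ_α f(y,α) ≤ 3 for every y ∈ F_2^n. -/
open Finset
open scoped Classical

/-!
Summing the inversion identity over the fibre `{y} × F₂ⁿ`, orthogonality of the characters
`α ↦ (-1)^{x·α}` kills every `z' = (x, β)` with `x ≠ 0`, leaving
`Σ_α f(y,α) = Σ_β (-1)^{y·β} f(0,β)`. Since `f ≥ 0`, this is at most `Σ_β f(0,β) ≤ 3`.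
-/

lemma zmod_two_eq_zero_or_eq_one (a : ZMod 2) : a = 0 ∨ a = 1 := by
  revert a; decide

@[simp] lemma sgn_zero : sgn 0 = 1 := by simp [sgn]

@[simp] lemma sgn_one : sgn 1 = -1 := by simp [sgn, ZMod.val_one]

lemma sgn_eq_one_iff {a : ZMod 2} : sgn a = 1 ↔ a = 0 := by
  rcases zmod_two_eq_zero_or_eq_one a with rfl | rfl <;> norm_num

lemma sgn_le_one (a : ZMod 2) : sgn a ≤ 1 := by
  rcases zmod_two_eq_zero_or_eq_one a with rfl | rfl <;> norm_num

lemma dotp_eq_dotProduct {n : ℕ} (x y : BV n) : dotp x y = x ⬝ᵥ y := rfl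

@[simps]
def dotpChar {n : ℕ} (x : BV n) : AddChar (BV n) ℝ where
  toFun α := sgn (dotp x α)
  map_zero_eq_one' := by simp [dotp_eq_dotProduct, sgn]
  map_add_eq_mul' α β := by simp only [dotp_eq_dotProduct, dotProduct_add, sgn_add]

lemma dotpChar_eq_zero_iff {n : ℕ} {x : BV n} : dotpChar x = 0 ↔ x = 0 := by
  rw [← dotProduct_eq_zero_iff, AddChar.eq_zero_iff]
  simp [dotpChar, sgn_eq_one_iff, dotp_eq_dotProduct]

lemma sum_sgn_dotp {n : ℕ} (x : BV n) :
    ∑ α : BV n, sgn (dotp x α) = if x = 0 then (2 : ℝ) ^ n else 0 := by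
  simpa [dotpChar_eq_zero_iff, Fintype.card_fun] using (dotpChar x).sum_eq_ite

lemma sum_sgn_symp_fiber {n : ℕ} (y : BV n) (z' : Pt n) :
    ∑ α : BV n, sgn (symp (y, α) z') = if z'.1 = 0 then 2 ^ n * sgn (dotp y z'.2) else 0 := by
  simp only [symp, sgn_add, ← mul_sum, sum_sgn_dotp]
  split_ifs <;> ring

lemma sum_fiber_eq_of_inversion {n : ℕ} (f : Pt n → ℝ)
    (hinv : ∀ z : Pt n, f z = (1 / 2 ^ n : ℝ) * ∑ z' : Pt n, sgn (symp z z') * f z') (y : BV n) :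
    ∑ α : BV n, f (y, α) = ∑ β : BV n, sgn (dotp y β) * f (0, β) := by
  calc ∑ α : BV n, f (y, α)
      = (1 / 2 ^ n : ℝ) * ∑ z' : Pt n, (∑ α : BV n, sgn (symp (y, α) z')) * f z' := by
        simp only [fun α => hinv (y, α), ← mul_sum, sum_mul]
        rw [sum_comm]
    _ = ∑ β : BV n, sgn (dotp y β) * f (0, β) := by
        simp only [sum_sgn_symp_fiber, ite_mul, zero_mul, Fintype.sum_prod_type, sum_ite_irrel,
          sum_const_zero, sum_ite_eq', mem_univ, if_true, mul_sum]
        refine sum_congr rfl fun β _ => ?_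
        field_simp

lemma sum_sgn_mul_le_sum {ι : Type*} (s : Finset ι) (c : ι → ZMod 2) {g : ι → ℝ}
    (hg : ∀ i ∈ s, 0 ≤ g i) : ∑ i ∈ s, sgn (c i) * g i ≤ ∑ i ∈ s, g i :=
  sum_le_sum fun i hi => mul_le_of_le_one_left (hg i hi) (sgn_le_one (c i))

theorem stmt18_general (n : ℕ) (f : Pt n → ℝ) (hf : ∀ z, 0 ≤ f z)
    (hinv : ∀ z : Pt n, f z = (1 / 2 ^ n : ℝ) * ∑ z' : Pt n, sgn (symp z z') * f z')
    (h0 : ∑ α : BV n, f (0, α) ≤ 3) :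
    ∀ y : BV n, ∑ α : BV n, f (y, α) ≤ 3 := fun y =>
  calc ∑ α : BV n, f (y, α) = ∑ β : BV n, sgn (dotp y β) * f (0, β) :=
        sum_fiber_eq_of_inversion f hinv y
    _ ≤ ∑ β : BV n, f (0, β) := sum_sgn_mul_le_sum _ _ fun β _ => hf (0, β)
    _ ≤ 3 := h0

/-- If `f ≥ 0` satisfies the symplectic Fourier inversion identity, the normalization
`(1/2^n) Σ f = 1`, and `Σ_α f(0,α) ≤ 3`, then `Σ_α f(y,α) ≤ 3` for every `y`. -/
theorem stmt18 (n : ℕ) (f : Pt n → ℝ) (hf : ∀ z, 0 ≤ f z)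
    (hinv : ∀ z : Pt n, f z = (1 / 2 ^ n : ℝ) * ∑ z' : Pt n, sgn (symp z z') * f z')
    (hnorm : (1 / 2 ^ n : ℝ) * ∑ z : Pt n, f z = 1)
    (h0 : ∑ α : BV n, f (0, α) ≤ 3) :
    ∀ y : BV n, ∑ α : BV n, f (y, α) ≤ 3 :=
  stmt18_general n f hf hinv h0
end
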